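/- Let a : ℝ³ → ℝ be twice continuously differentiable and suppose there are positive constants C₁, M₁, M₂ with a(x) ≥ C₁, ω(x)·‖∇a(x)‖ ≤ M₁ and ω(x)²·|Δa(x)| ≤ M₂ for all x ∈ ℝ³. Then for every continuously differentiable g : ℝ³ → ℝ, ‖ω·( ⟨∇g, ∇(ln a)⟩ + g·Δ(ln a) )‖_{L²} ≤ (M₁/C₁)·‖∇g‖_{L²} + ((C₁·M₂ + M₁²)/C₁²)·‖ω⁻¹·g‖_{L²}. In particular, the divergence ∇·(g ∇(ln a)) = ⟨∇g, ∇(ln a)⟩ + g·Δ(ln a) belongs to the weighted space L²(ω; ℝ³) whenever g lies in the weighted Sobolev space ℋ¹(ℝ³). -/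

import Mathlib

/-!
Since `∇(ln a) = ∇a / a` and `Δ(ln a) = Δa / a - ‖∇a‖² / a²`, the hypotheses give the pointwise
bounds `ω ‖∇(ln a)‖ ≤ M₁ / C₁` and `ω² |Δ(ln a)| ≤ M₂ / C₁ + M₁² / C₁²`. Cauchy–Schwarz on the
first term and the splitting `ω g Δ(ln a) = (ω⁻¹ g) (ω² Δ(ln a))` of the second bound the integrand
pointwise by `(M₁ / C₁) ‖∇g‖ + ((C₁ M₂ + M₁²) / C₁²) |ω⁻¹ g|`, and Minkowski's inequality in `L²`
concludes.
-/

open MeasureTheory Real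
open scoped ENNReal RealInnerProductSpace

noncomputable section

abbrev E3 : Type := EuclideanSpace ℝ (Fin 3)

def ω (x : E3) : ℝ := Real.sqrt (1 + ‖x‖ ^ 2)

def pderiv3 (i : Fin 3) (f : E3 → ℝ) (x : E3) : ℝ := fderiv ℝ f x (EuclideanSpace.single i 1)

def laplacian3 (f : E3 → ℝ) (x : E3) : ℝ := ∑ i : Fin 3, pderiv3 i (pderiv3 i f) x

lemma one_le_ω (x : E3) : 1 ≤ ω x :=
  Real.one_le_sqrt.mpr (le_add_of_nonneg_right (sq_nonneg ‖x‖))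

lemma ω_pos (x : E3) : 0 < ω x :=
  zero_lt_one.trans_le (one_le_ω x)

lemma continuous_ω : Continuous ω := by
  unfold ω; fun_prop

section Gradient

variable {F : Type*} [NormedAddCommGroup F] [InnerProductSpace ℝ F] [CompleteSpace F]

lemma gradient_log {a : F → ℝ} {x : F} (ha : DifferentiableAt ℝ a x) (hx : a x ≠ 0) :
    gradient (fun y => Real.log (a y)) x = (a x)⁻¹ • gradient a x := by
  rw [gradient, gradient, fderiv.log ha hx, map_smul]

lemma norm_sq_gradient_eq_sum {ι : Type*} [Fintype ι] [DecidableEq ι]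
    (f : EuclideanSpace ℝ ι → ℝ) (x : EuclideanSpace ℝ ι) :
    ‖gradient f x‖ ^ 2 = ∑ i, fderiv ℝ f x (EuclideanSpace.single i 1) ^ 2 := by
  rw [EuclideanSpace.norm_sq_eq]
  congr 1 with i
  rw [← inner_gradient_left, EuclideanSpace.inner_single_right]
  simp

end Gradient

lemma pderiv3_comp {φ : ℝ → ℝ} {f : E3 → ℝ} {x : E3} (hφ : DifferentiableAt ℝ φ (f x))
    (hf : DifferentiableAt ℝ f x) (i : Fin 3) :
    pderiv3 i (fun y => φ (f y)) x = deriv φ (f x) * pderiv3 i f x := by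
  change fderiv ℝ (φ ∘ f) x _ = _
  rw [(hφ.hasDerivAt.comp_hasFDerivAt x hf.hasFDerivAt).fderiv]
  simp [pderiv3]

lemma pderiv3_mul {u v : E3 → ℝ} {x : E3} (hu : DifferentiableAt ℝ u x)
    (hv : DifferentiableAt ℝ v x) (i : Fin 3) :
    pderiv3 i (fun y => u y * v y) x = u x * pderiv3 i v x + v x * pderiv3 i u x := by
  simp [pderiv3, fderiv_fun_mul hu hv]

lemma pderiv3_pderiv3_log {a : E3 → ℝ} (ha : ContDiff ℝ 2 a) (hne : ∀ y, a y ≠ 0) (i : Fin 3)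
    (x : E3) :
    pderiv3 i (pderiv3 i (fun y => Real.log (a y))) x
      = (a x)⁻¹ * pderiv3 i (pderiv3 i a) x - (a x ^ 2)⁻¹ * pderiv3 i a x ^ 2 := by
  have hda : Differentiable ℝ a := ha.differentiable two_ne_zero
  have hdpa : Differentiable ℝ (pderiv3 i a) := fun y =>
    ((ha.fderiv_right one_add_one_eq_two.le).differentiable one_ne_zero y).clm_apply
      (differentiableAt_const _)
  have hlog : pderiv3 i (fun y => Real.log (a y)) = fun y => (a y)⁻¹ * pderiv3 i a y := by
    ext y
    rw [pderiv3_comp (differentiableAt_log (hne y)) (hda y), Real.deriv_log]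
  rw [hlog, pderiv3_mul (u := fun y => (a y)⁻¹) ((hda x).inv (hne x)) (hdpa x),
    pderiv3_comp (differentiableAt_inv (hne x)) (hda x), deriv_inv]
  ring

lemma laplacian3_log {a : E3 → ℝ} (ha : ContDiff ℝ 2 a) (hne : ∀ y, a y ≠ 0) (x : E3) :
    laplacian3 (fun y => Real.log (a y)) x
      = (a x)⁻¹ * laplacian3 a x - (a x ^ 2)⁻¹ * ‖gradient a x‖ ^ 2 := by
  rw [norm_sq_gradient_eq_sum, laplacian3, laplacian3, Finset.mul_sum, Finset.mul_sum,
    ← Finset.sum_sub_distrib]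
  exact Finset.sum_congr rfl fun i _ => pderiv3_pderiv3_log ha hne i x

lemma abs_mul_inner_add_mul_le {F : Type*} [NormedAddCommGroup F] [InnerProductSpace ℝ F]
    {w c₁ c₂ t L : ℝ} {u G : F} (hw : 0 < w) (hG : w * ‖G‖ ≤ c₁) (hL : w ^ 2 * |L| ≤ c₂) :
    |w * (⟪u, G⟫ + t * L)| ≤ c₁ * ‖u‖ + c₂ * |w⁻¹ * t| :=
  calc |w * (⟪u, G⟫ + t * L)| ≤ w * (‖u‖ * ‖G‖ + |t| * |L|) := by
        rw [abs_mul, abs_of_pos hw]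
        gcongr
        exact (abs_add_le _ _).trans
          (add_le_add (abs_real_inner_le_norm u G) (abs_mul t L).le)
    _ = ‖u‖ * (w * ‖G‖) + |w⁻¹ * t| * (w ^ 2 * |L|) := by
        rw [abs_mul, abs_inv, abs_of_pos hw]
        field_simp
    _ ≤ ‖u‖ * c₁ + |w⁻¹ * t| * c₂ := by gcongr
    _ = c₁ * ‖u‖ + c₂ * |w⁻¹ * t| := by ring

section LogBounds

variable {C₁ M₁ M₂ : ℝ} {a : E3 → ℝ} (hC₁ : 0 < C₁) (ha : ContDiff ℝ 2 a)
  (hlow : ∀ x, C₁ ≤ a x) (hgrad : ∀ x, ω x * ‖gradient a x‖ ≤ M₁)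
  (hlap : ∀ x, ω x ^ 2 * |laplacian3 a x| ≤ M₂)
include hC₁ ha hlow hgrad

lemma ω_mul_norm_gradient_log_le (x : E3) :
    ω x * ‖gradient (fun y => Real.log (a y)) x‖ ≤ M₁ / C₁ := by
  have hax : 0 < a x := hC₁.trans_le (hlow x)
  rw [gradient_log ((ha.differentiable two_ne_zero) x) hax.ne', norm_smul, norm_inv,
    Real.norm_of_nonneg hax.le, mul_left_comm, ← div_eq_inv_mul]
  exact div_le_div₀ ((mul_nonneg (ω_pos x).le (norm_nonneg _)).trans (hgrad x)) (hgrad x)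
    hC₁ (hlow x)

include hlap in
lemma ω_sq_mul_abs_laplacian3_log_le (x : E3) :
    ω x ^ 2 * |laplacian3 (fun y => Real.log (a y)) x| ≤ (C₁ * M₂ + M₁ ^ 2) / C₁ ^ 2 := by
  have hax : 0 < a x := hC₁.trans_le (hlow x)
  have hωN : 0 ≤ ω x * ‖gradient a x‖ := mul_nonneg (ω_pos x).le (norm_nonneg _)
  rw [laplacian3_log ha (fun y => (hC₁.trans_le (hlow y)).ne') x]
  calc ω x ^ 2 * |(a x)⁻¹ * laplacian3 a x - (a x ^ 2)⁻¹ * ‖gradient a x‖ ^ 2|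
      ≤ ω x ^ 2 * (|(a x)⁻¹ * laplacian3 a x| + |(a x ^ 2)⁻¹ * ‖gradient a x‖ ^ 2|) := by
        gcongr; exact abs_sub _ _
    _ = ω x ^ 2 * |laplacian3 a x| / a x + (ω x * ‖gradient a x‖) ^ 2 / a x ^ 2 := by
        rw [abs_mul, abs_mul, abs_inv, abs_inv, abs_of_pos hax, abs_of_pos (pow_pos hax 2),
          abs_of_nonneg (sq_nonneg ‖gradient a x‖)]
        ring
    _ ≤ M₂ / C₁ + M₁ ^ 2 / C₁ ^ 2 := by
        gcongr
        exacts [(by positivity : (0:ℝ) ≤ _).trans (hlap x), hlap x, hlow x, hgrad x, hlow x]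
    _ = (C₁ * M₂ + M₁ ^ 2) / C₁ ^ 2 := by field_simp

end LogBounds

lemma eLpNorm_le_of_norm_le_add {α E F G : Type*} [MeasurableSpace α] {μ : Measure α}
    [NormedAddCommGroup E] [NormedAddCommGroup F] [NormedAddCommGroup G] {p : ℝ≥0∞} (hp : 1 ≤ p)
    {f : α → E} {u : α → F} {v : α → G} {c₁ c₂ : ℝ} (hc₁ : 0 ≤ c₁) (hc₂ : 0 ≤ c₂)
    (hu : AEStronglyMeasurable u μ) (hv : AEStronglyMeasurable v μ)
    (h : ∀ x, ‖f x‖ ≤ c₁ * ‖u x‖ + c₂ * ‖v x‖) :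
    eLpNorm f p μ ≤ ENNReal.ofReal c₁ * eLpNorm u p μ + ENNReal.ofReal c₂ * eLpNorm v p μ :=
  calc eLpNorm f p μ ≤ eLpNorm (c₁ • (fun x => ‖u x‖) + c₂ • fun x => ‖v x‖) p μ :=
        eLpNorm_mono_real h
    _ ≤ eLpNorm (c₁ • fun x => ‖u x‖) p μ + eLpNorm (c₂ • fun x => ‖v x‖) p μ :=
        eLpNorm_add_le (hu.norm.const_smul c₁) (hv.norm.const_smul c₂) hp
    _ = ENNReal.ofReal c₁ * eLpNorm u p μ + ENNReal.ofReal c₂ * eLpNorm v p μ := by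
        rw [eLpNorm_const_smul, eLpNorm_const_smul, eLpNorm_norm, eLpNorm_norm,
          Real.enorm_eq_ofReal hc₁, Real.enorm_eq_ofReal hc₂]

theorem statement8_general (C₁ M₁ M₂ : ℝ) (hC₁ : 0 < C₁)
    (a : E3 → ℝ) (ha : ContDiff ℝ 2 a)
    (hlow : ∀ x, C₁ ≤ a x)
    (hgrad : ∀ x, ω x * ‖gradient a x‖ ≤ M₁)
    (hlap : ∀ x, ω x ^ 2 * |laplacian3 a x| ≤ M₂)
    (g : E3 → ℝ) (hg : ContDiff ℝ 1 g) :
    eLpNorm (fun x => ω x * (⟪gradient g x, gradient (fun y => Real.log (a y)) x⟫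
        + g x * laplacian3 (fun y => Real.log (a y)) x)) 2 volume
    ≤ ENNReal.ofReal (M₁ / C₁) * eLpNorm (fun x => gradient g x) 2 volume
      + ENNReal.ofReal ((C₁ * M₂ + M₁ ^ 2) / C₁ ^ 2) *
          eLpNorm (fun x => (ω x)⁻¹ * g x) 2 volume := by
  have hc₁ : 0 ≤ M₁ / C₁ :=
    (mul_nonneg (ω_pos 0).le (norm_nonneg _)).trans
      (ω_mul_norm_gradient_log_le hC₁ ha hlow hgrad 0)
  have hc₂ : 0 ≤ (C₁ * M₂ + M₁ ^ 2) / C₁ ^ 2 :=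
    (mul_nonneg (sq_nonneg _) (abs_nonneg _)).trans
      (ω_sq_mul_abs_laplacian3_log_le hC₁ ha hlow hgrad hlap 0)
  have hgrad_g : AEStronglyMeasurable (fun x => gradient g x) volume :=
    ((InnerProductSpace.toDual ℝ E3).symm.continuous.measurable.comp
      (measurable_fderiv ℝ g)).aestronglyMeasurable
  have hg_weighted : AEStronglyMeasurable (fun x => (ω x)⁻¹ * g x) volume :=
    ((continuous_ω.inv₀ fun x => (ω_pos x).ne').mul hg.continuous).aestronglyMeasurable
  refine eLpNorm_le_of_norm_le_add one_le_two hc₁ hc₂ hgrad_g hg_weighted fun x => ?_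
  rw [Real.norm_eq_abs, Real.norm_eq_abs]
  exact abs_mul_inner_add_mul_le (ω_pos x) (ω_mul_norm_gradient_log_le hC₁ ha hlow hgrad x)
    (ω_sq_mul_abs_laplacian3_log_le hC₁ ha hlow hgrad hlap x)

/-- the divergence `∇·(g∇(ln a)) = ⟨∇g, ∇(ln a)⟩ + g·Δ(ln a)` lies in the weighted
space `L²(ω;ℝ³)` whenever `g ∈ ℋ¹(ℝ³)`, with the explicit estimate. -/
theorem statement8 (C₁ M₁ M₂ : ℝ) (hC₁ : 0 < C₁) (hM₁ : 0 < M₁) (hM₂ : 0 < M₂)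
    (a : E3 → ℝ) (ha : ContDiff ℝ 2 a)
    (hlow : ∀ x, C₁ ≤ a x)
    (hgrad : ∀ x, ω x * ‖gradient a x‖ ≤ M₁)
    (hlap : ∀ x, ω x ^ 2 * |laplacian3 a x| ≤ M₂)
    (g : E3 → ℝ) (hg : ContDiff ℝ 1 g) :
    eLpNorm (fun x => ω x * (⟪gradient g x, gradient (fun y => Real.log (a y)) x⟫
        + g x * laplacian3 (fun y => Real.log (a y)) x)) 2 volume
    ≤ ENNReal.ofReal (M₁ / C₁) * eLpNorm (fun x => gradient g x) 2 volume
      + ENNReal.ofReal ((C₁ * M₂ + M₁ ^ 2) / C₁ ^ 2) *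
          eLpNorm (fun x => (ω x)⁻¹ * g x) 2 volume :=
  statement8_general C₁ M₁ M₂ hC₁ a ha hlow hgrad hlap g hg
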